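/- arXiv:1907.01940 — 2 statements merged into one kernel-verified Lean document; each statement's English description precedes it below -/
import Mathlib

section
/- For all n ≥ 1 and d ≥ 1, the set A = ⋃_{i=1}^{d} V_{in} percolates in d-neighbour bootstrap percolation on [n]^d, where V_k = {v ∈ [n]^d : Σ v_i = k}. -/
/-- The grid `[n]^d = {1,...,n}^d`, embedded in `ℕ^d`. -/
def gridSet (n d : ℕ) : Set (Fin d → ℕ) := {v | ∀ i, 1 ≤ v i ∧ v i ≤ n}

/-- Adjacency: differ by 1 in exactly one coordinate. -/
def gridAdj {d : ℕ} (u v : Fin d → ℕ) : Prop :=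
  ∃ j, (u j = v j + 1 ∨ v j = u j + 1) ∧ ∀ i, i ≠ j → u i = v i

/-- One round of `r`-neighbour bootstrap percolation on `[n]^d`. -/
def bpStep (n d r : ℕ) (S : Set (Fin d → ℕ)) : Set (Fin d → ℕ) :=
  S ∪ {v ∈ gridSet n d | r ≤ {u ∈ S | gridAdj u v}.ncard}

/-- Infected set after `t` rounds, starting from `A`. -/
def infected (n d r : ℕ) (A : Set (Fin d → ℕ)) (t : ℕ) : Set (Fin d → ℕ) :=
  (bpStep n d r)^[t] A

/-- The closure of `A`: all eventually infected vertices. -/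
def bpClosure (n d r : ℕ) (A : Set (Fin d → ℕ)) : Set (Fin d → ℕ) :=
  ⋃ t, infected n d r A t

/-- `A` percolates if every grid vertex is eventually infected. -/
def percolates (n d r : ℕ) (A : Set (Fin d → ℕ)) : Prop :=
  gridSet n d ⊆ bpClosure n d r A

/-- Percolation time: least `t` with the whole grid infected. -/
noncomputable def percTime (n d r : ℕ) (A : Set (Fin d → ℕ)) : ℕ :=
  sInf {t | gridSet n d ⊆ infected n d r A t}

/-- `V_k`: grid vertices of coordinate sum `k`. -/
def hyperplane (n d k : ℕ) : Set (Fin d → ℕ) := {v ∈ gridSet n d | ∑ i, v i = k}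

/-- The "cyclic combination" set `A = ⋃_{i=1}^d V_{in}`. -/
def diagUnion (n d : ℕ) : Set (Fin d → ℕ) :=
  ⋃ i ∈ Finset.Icc 1 d, hyperplane n d (i * n)

/-!
A grid vertex `v` whose coordinate sum is `q * n + a` with `0 < a < n` has `d` neighbours, one in
each direction `j`: raise `v j` if `v j ≤ a`, lower it otherwise. They stay in the grid, and their
coordinate sums are `q * n + (a ± 1)`. Vertices whose sum is a multiple of `n` lie in the initial
set, because `d ≤ ∑ i, v i ≤ d * n`. Along each such step the potential
`∑ i, v i ^ 2 + (n - a) * (n + a + 1)` strictly decreases: raising `v j ≤ a` adds `2 * v j + 1`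
to the first term and removes `2 * a + 2` from the second, lowering `v j > a` removes
`2 * v j - 1` from the first and adds `2 * a` to the second. Induction on the potential infects
every vertex.
-/

open Function

lemma Fintype.sum_comp_update_add {ι α M : Type*} [Fintype ι] [DecidableEq ι] [AddCommMonoid M]
    (g : α → M) (v : ι → α) (j : ι) (x : α) :
    ∑ i, g (update v j x i) + g (v j) = ∑ i, g (v i) + g x := by
  rw [Fintype.sum_eq_add_sum_compl j, Fintype.sum_eq_add_sum_compl j (fun i => g (v i)),
    update_self, Finset.sum_congr rfl fun i hi => by rw [update_of_ne (by simpa using hi)]]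
  abel

section BootstrapPercolation

variable {n d r : ℕ} {A : Set (Fin d → ℕ)}

lemma infected_monotone (n d r : ℕ) (A : Set (Fin d → ℕ)) : Monotone (infected n d r A) :=
  monotone_nat_of_le_succ fun t => by
    rw [infected, infected, iterate_succ_apply']
    exact Set.subset_union_left

lemma subset_bpClosure : A ⊆ bpClosure n d r A :=
  Set.subset_iUnion (infected n d r A) 0

lemma setOf_gridAdj_finite (v : Fin d → ℕ) : {u | gridAdj u v}.Finite :=
  (Set.finite_Iic (v + 1)).subset fun u ⟨j, hj, hne⟩ i => by
    by_cases h : i = j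
    · subst h
      simp only [Pi.add_apply, Pi.one_apply]
      omega
    · simp [hne i h]

lemma update_mem_gridSet {v : Fin d → ℕ} (hv : v ∈ gridSet n d) (j : Fin d) {x : ℕ}
    (h1 : 1 ≤ x) (hxn : x ≤ n) : update v j x ∈ gridSet n d := by
  intro i
  by_cases h : i = j
  · subst h
    simp [h1, hxn]
  · simpa [update_of_ne h] using hv i

lemma mem_bpClosure_of_finset {v : Fin d → ℕ} (hv : v ∈ gridSet n d)
    (F : Finset (Fin d → ℕ)) (hF : r ≤ F.card) (hadj : ∀ u ∈ F, gridAdj u v)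
    (hcl : (F : Set (Fin d → ℕ)) ⊆ bpClosure n d r A) : v ∈ bpClosure n d r A := by
  obtain ⟨t, ht⟩ :=
    (infected_monotone n d r A).directed_le.exists_mem_subset_of_finset_subset_biUnion hcl
  refine Set.mem_iUnion.mpr ⟨t + 1, ?_⟩
  rw [infected, iterate_succ_apply']
  refine Or.inr ⟨hv, ?_⟩
  calc r ≤ F.card := hF
    _ = (F : Set (Fin d → ℕ)).ncard := (Set.ncard_coe_finset F).symm
    _ ≤ {u ∈ infected n d r A t | gridAdj u v}.ncard :=
      Set.ncard_le_ncard (fun u hu => ⟨ht hu, hadj u hu⟩)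
        ((setOf_gridAdj_finite v).subset fun u hu => hu.2)

lemma mem_bpClosure_of_forall_update {v : Fin d → ℕ} (hv : v ∈ gridSet n d)
    (h : ∀ j, ∃ x, (x = v j + 1 ∨ v j = x + 1) ∧ update v j x ∈ bpClosure n d d A) :
    v ∈ bpClosure n d d A := by
  choose x hx hcl using h
  have hinj : Injective fun j => update v j (x j) := by
    intro j k hjk
    by_contra hne
    have := congrFun hjk j
    simp only [update_self, update_of_ne hne] at this
    have := hx j
    omega
  refine mem_bpClosure_of_finset hv (Finset.univ.image fun j => update v j (x j)) ?_ ?_ ?_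
  · simp [Finset.card_image_of_injective _ hinj]
  · simp only [Finset.mem_image, Finset.mem_univ, true_and, forall_exists_index,
      forall_apply_eq_imp_iff]
    intro j
    exact ⟨j, by simpa using hx j, fun i hi => update_of_ne hi _ _⟩
  · simpa [Set.range_subset_iff] using hcl

end BootstrapPercolation

section DiagUnion

variable {n d : ℕ}

lemma mem_diagUnion_of_sum_eq_mul (hd : 1 ≤ d) {v : Fin d → ℕ} (hv : v ∈ gridSet n d) {q : ℕ}
    (hq : ∑ i, v i = q * n) : v ∈ diagUnion n d := by
  have hlow : d ≤ q * n := by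
    simpa [hq] using Finset.card_nsmul_le_sum Finset.univ v 1 fun i _ => (hv i).1
  have hhigh : q * n ≤ d * n := by
    simpa [hq] using Finset.sum_le_card_nsmul Finset.univ v n fun i _ => (hv i).2
  obtain ⟨hq0, hn⟩ := CanonicallyOrderedAdd.mul_pos.mp (show 0 < q * n by omega)
  exact Set.mem_iUnion₂.mpr
    ⟨q, Finset.mem_Icc.mpr ⟨hq0, Nat.le_of_mul_le_mul_right hhigh hn⟩, hv, hq⟩

def diagPotential (n : ℕ) (v : Fin d → ℕ) (a : ℕ) : ℕ :=
  ∑ i, v i ^ 2 + (n - a) * (n + a + 1)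

lemma diagPotential_eq_succ_add (v : Fin d → ℕ) {a : ℕ} (ha : a < n) :
    diagPotential n v a = diagPotential n v (a + 1) + 2 * (a + 1) := by
  obtain ⟨c, rfl⟩ := Nat.exists_eq_add_of_lt ha
  rw [diagPotential, diagPotential, show a + c + 1 - a = c + 1 by omega,
    show a + c + 1 - (a + 1) = c by omega]
  ring

lemma diagPotential_update_succ_lt {v : Fin d → ℕ} {j : Fin d} {a : ℕ} (hj : v j ≤ a)
    (ha : a < n) : diagPotential n (update v j (v j + 1)) (a + 1) < diagPotential n v a := by
  have hsq := Fintype.sum_comp_update_add (· ^ 2) v j (v j + 1)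
  have hpot := diagPotential_eq_succ_add v ha
  simp only [diagPotential] at hpot ⊢
  linarith

lemma diagPotential_update_pred_lt {v : Fin d → ℕ} {j : Fin d} {x b : ℕ} (hx : v j = x + 1)
    (hb : b < x) (hbn : b < n) : diagPotential n (update v j x) b < diagPotential n v (b + 1) := by
  have hsq := Fintype.sum_comp_update_add (· ^ 2) v j x
  have hpot := diagPotential_eq_succ_add v hbn
  simp only [diagPotential, hx] at hsq hpot ⊢
  linarith

theorem mem_bpClosure_diagUnion_of_sum_eq (hd : 1 ≤ d) {v : Fin d → ℕ} (hv : v ∈ gridSet n d)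
    {q a : ℕ} (hsum : ∑ i, v i = q * n + a) (ha : a < n) :
    v ∈ bpClosure n d d (diagUnion n d) := by
  induction hP : diagPotential n v a using Nat.strong_induction_on generalizing v a with
  | _ m ih =>
  subst hP
  rcases Nat.eq_zero_or_pos a with rfl | ha0
  · exact subset_bpClosure (mem_diagUnion_of_sum_eq_mul hd hv hsum)
  refine mem_bpClosure_of_forall_update hv fun j => ?_
  have hsum_update (x : ℕ) : ∑ i, update v j x i + v j = ∑ i, v i + x :=
    Fintype.sum_comp_update_add (fun k => k) v j x
  by_cases hja : v j ≤ a
  · refine ⟨v j + 1, .inl rfl, ?_⟩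
    have hw := update_mem_gridSet hv j (x := v j + 1) (by omega) (by omega)
    have hsum' : ∑ i, update v j (v j + 1) i = q * n + (a + 1) := by
      have := hsum_update (v j + 1)
      omega
    rcases (show a + 1 ≤ n from ha).eq_or_lt with hn | hn
    · refine subset_bpClosure (mem_diagUnion_of_sum_eq_mul hd hw (q := q + 1) ?_)
      rw [hsum', ← hn]
      ring
    · exact ih _ (diagPotential_update_succ_lt hja ha) hw hsum' hn rfl
  · obtain ⟨b, rfl⟩ : ∃ b, a = b + 1 := ⟨a - 1, by omega⟩
    obtain ⟨x, hx⟩ : ∃ x, v j = x + 1 := ⟨v j - 1, by omega⟩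
    refine ⟨x, .inr hx, ?_⟩
    have hw := update_mem_gridSet hv j (x := x) (by omega) (by have := (hv j).2; omega)
    have hsum' : ∑ i, update v j x i = q * n + b := by
      have := hsum_update x
      omega
    exact ih _ (diagPotential_update_pred_lt hx (by omega) (by omega)) hw hsum' (by omega) rfl

end DiagUnion

theorem diagUnion_percolates (n d : ℕ) (hn : 1 ≤ n) (hd : 1 ≤ d) :
    percolates n d d (diagUnion n d) := fun _ hv =>
  mem_bpClosure_diagUnion_of_sum_eq hd hv (Nat.div_add_mod' _ n).symm (Nat.mod_lt _ hn)
end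

section
/- For d ≥ 2, in d-neighbour bootstrap percolation on [n]^d, for any percolating set A of size n^{d-1}, at least one of the two adjacent vertices (⌈n/2⌉, ..., ⌈n/2⌉) and (⌈n/2⌉+1, ⌈n/2⌉, ..., ⌈n/2⌉) is not in A (for the d=2 case, the pair (⌈n/2⌉, ⌈n/2⌉) and (⌊n/2⌋, ⌈(n+1)/2⌉)). -/
/-!
Measure a finite vertex set by its perimeter, the number of grid edges leaving it, where every
vertex is given its `2d` lattice neighbours. A vertex infected in `d`-neighbour bootstrap
percolation has at least half of its neighbours already infected, so infecting it does not
increase the perimeter. The full grid `[n]^d` has perimeter `2d n^(d-1)`, while a set `A`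
containing two adjacent vertices has perimeter at most `2d |A| - 2`. Hence a percolating set with
an adjacent pair has more than `n^(d-1)` elements, and the two central vertices are adjacent.
-/

open Finset

section Perimeter

variable {α : Type*} [DecidableEq α] (r : α → α → Prop) [DecidableRel r]

def adjPairs (F : Finset α) : ℕ := ∑ v ∈ F, #{u ∈ F | r v u}

/-- The edge boundary of `F` in a graph all of whose vertices have degree `Δ`. -/
def perimeter (Δ : ℕ) (F : Finset α) : ℤ := Δ * #F - adjPairs r F

variable {r} [Std.Symm r]

lemma adjPairs_union {S N : Finset α} (hSN : Disjoint S N) :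
    adjPairs r (S ∪ N) = adjPairs r S + 2 * ∑ v ∈ N, #{u ∈ S | r v u} + adjPairs r N := by
  have hsplit : ∀ v, #{u ∈ S ∪ N | r v u} = #{u ∈ S | r v u} + #{u ∈ N | r v u} := fun v => by
    rw [filter_union, card_union_of_disjoint (disjoint_filter_filter hSN)]
  have hswap : ∑ v ∈ S, #{u ∈ N | r v u} = ∑ v ∈ N, #{u ∈ S | r v u} := by
    simpa only [bipartiteAbove, bipartiteBelow, comm (r := r)]
      using sum_card_bipartiteAbove_eq_sum_card_bipartiteBelow (s := S) (t := N) (r := r)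
  simp only [adjPairs, sum_union hSN, hsplit, sum_add_distrib, hswap]
  ring

/-- A new vertex with `k` neighbours in `S` removes the `k` boundary edges between it and `S`
and adds at most `Δ - k`, so the perimeter does not grow as long as `Δ ≤ 2 k`. -/
lemma perimeter_le_of_subset {Δ : ℕ} {S T : Finset α} (hST : S ⊆ T)
    (hdeg : ∀ v ∈ T \ S, Δ ≤ 2 * #{u ∈ S | r v u}) :
    perimeter r Δ T ≤ perimeter r Δ S := by
  have hnew : #(T \ S) * Δ ≤ 2 * ∑ v ∈ T \ S, #{u ∈ S | r v u} := by
    rw [mul_sum]; simpa using card_nsmul_le_sum _ _ _ hdeg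
  rw [← union_sdiff_of_subset hST]
  simp only [perimeter, adjPairs_union disjoint_sdiff, card_union_of_disjoint disjoint_sdiff]
  have : (#(T \ S) * Δ : ℤ) ≤ 2 * ∑ v ∈ T \ S, (#{u ∈ S | r v u} : ℤ) := by exact_mod_cast hnew
  push_cast
  linarith

lemma perimeter_le_of_adj [Std.Irrefl r] (Δ : ℕ) {F : Finset α} {a b : α}
    (ha : a ∈ F) (hb : b ∈ F) (hab : r a b) :
    perimeter r Δ F ≤ Δ * #F - 2 := by
  have hne : a ≠ b := fun h => irrefl a (h ▸ hab : r a a)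
  have hpair : 2 ≤ #{u ∈ F | r a u} + #{u ∈ F | r b u} :=
    add_le_add (one_le_card.mpr ⟨b, mem_filter.mpr ⟨hb, hab⟩⟩)
      (one_le_card.mpr ⟨a, mem_filter.mpr ⟨ha, symm hab⟩⟩)
  have : 2 ≤ adjPairs r F := hpair.trans <| by
    rw [adjPairs, ← sum_pair (f := fun v => #{u ∈ F | r v u}) hne]
    exact sum_le_sum_of_subset (insert_subset ha (singleton_subset_iff.mpr hb))
  unfold perimeter
  omega

end Perimeter

section Grid

variable {n d : ℕ}

instance : DecidableRel (gridAdj (d := d)) := fun _ _ => by unfold gridAdj; infer_instance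

instance : Std.Symm (gridAdj (d := d)) where
  symm _ _ := fun ⟨j, hj, hother⟩ => ⟨j, hj.symm, fun i hi => (hother i hi).symm⟩

instance : Std.Irrefl (gridAdj (d := d)) where
  irrefl _ := fun ⟨_, hj, _⟩ => by omega

lemma gridAdj_const_ite_succ (c : ℕ) (j : Fin d) :
    gridAdj (fun _ => c) (fun i => if i = j then c + 1 else c) :=
  ⟨j, Or.inr (if_pos rfl), fun _ hi => (if_neg hi).symm⟩

def gridFinset (n d : ℕ) : Finset (Fin d → ℕ) := Fintype.piFinset fun _ => Icc 1 n

lemma mem_gridFinset {v : Fin d → ℕ} : v ∈ gridFinset n d ↔ ∀ i, 1 ≤ v i ∧ v i ≤ n := by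
  simp [gridFinset]

lemma coe_gridFinset : (gridFinset n d : Set (Fin d → ℕ)) = gridSet n d :=
  Set.ext fun _ => mem_gridFinset

lemma card_gridFinset : #(gridFinset n d) = n ^ d := by
  simp [gridFinset]

lemma card_gridFinset_filter_eq (j : Fin d) {c : ℕ} (hc1 : 1 ≤ c) (hcn : c ≤ n) :
    #{v ∈ gridFinset n d | v j = c} = n ^ (d - 1) := by
  simpa [gridFinset] using
    Fintype.card_filter_piFinset_const_eq_of_mem (Icc 1 n) j (mem_Icc.mpr ⟨hc1, hcn⟩)

def unitStep (p : Fin d × Bool) (v : Fin d → ℕ) : Fin d → ℕ :=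
  Function.update v p.1 (if p.2 then v p.1 + 1 else v p.1 - 1)

lemma exists_unitStep_eq_of_gridAdj {u v : Fin d → ℕ} (h : gridAdj v u) :
    ∃ p, unitStep p v = u := by
  obtain ⟨j, hj, hother⟩ := h
  refine ⟨(j, decide (u j = v j + 1)), funext fun i => ?_⟩
  rcases eq_or_ne i j with rfl | hi
  · by_cases hu : u i = v i + 1 <;> simp [unitStep, hu]
    omega
  · simp [unitStep, hi, hother i hi]

lemma adjPairs_gridAdj_le (F : Finset (Fin d → ℕ)) :
    adjPairs gridAdj F ≤ ∑ p : Fin d × Bool, #{v ∈ F | unitStep p v ∈ F} := by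
  have hv : ∀ v, #{u ∈ F | gridAdj v u} ≤ #{p | unitStep p v ∈ F} := fun v =>
    card_le_card_of_surjOn (unitStep · v) fun u hu => by
      obtain ⟨hu, hvu⟩ := mem_filter.mp hu
      obtain ⟨p, rfl⟩ := exists_unitStep_eq_of_gridAdj hvu
      exact ⟨p, by simpa using hu, rfl⟩
  calc adjPairs gridAdj F ≤ ∑ v ∈ F, #{p | unitStep p v ∈ F} := sum_le_sum fun v _ => hv v
    _ = _ := by
      simpa only [bipartiteAbove, bipartiteBelow] using
        sum_card_bipartiteAbove_eq_sum_card_bipartiteBelow (s := F) (t := univ)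
          (r := fun v p => unitStep p v ∈ F)

/-- A step upwards leaves the grid from the face `v j = n`, a step downwards from `v j = 1`. -/
lemma card_filter_unitStep_mem_gridFinset_add (hn : 1 ≤ n) (p : Fin d × Bool) :
    #{v ∈ gridFinset n d | unitStep p v ∈ gridFinset n d} + n ^ (d - 1) ≤ n ^ d := by
  set face := if p.2 then n else 1
  have hface : 1 ≤ face ∧ face ≤ n := by simp only [face]; split_ifs <;> omega
  have hdisj : Disjoint {v ∈ gridFinset n d | unitStep p v ∈ gridFinset n d}
      {v ∈ gridFinset n d | v p.1 = face} := by
    refine disjoint_filter.mpr fun v _ hstep hv => ?_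
    have := mem_gridFinset.mp hstep p.1
    cases h : p.2 <;> simp_all [unitStep, face]
  rw [← card_gridFinset_filter_eq p.1 hface.1 hface.2, ← card_union_of_disjoint hdisj,
    ← card_gridFinset]
  exact card_le_card (union_subset (filter_subset _ _) (filter_subset _ _))

lemma perimeter_gridFinset_ge (hn : 1 ≤ n) :
    2 * d * n ^ (d - 1) ≤ perimeter gridAdj (2 * d) (gridFinset n d) := by
  have hcount : adjPairs gridAdj (gridFinset n d) + 2 * d * n ^ (d - 1) ≤ 2 * d * n ^ d := by
    calc adjPairs gridAdj (gridFinset n d) + 2 * d * n ^ (d - 1)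
        ≤ ∑ p : Fin d × Bool,
            (#{v ∈ gridFinset n d | unitStep p v ∈ gridFinset n d} + n ^ (d - 1)) := by
          rw [sum_add_distrib, sum_const, card_univ]
          simpa [mul_comm] using adjPairs_gridAdj_le (gridFinset n d)
      _ ≤ ∑ _p : Fin d × Bool, n ^ d :=
          sum_le_sum fun p _ => card_filter_unitStep_mem_gridFinset_add hn p
      _ = 2 * d * n ^ d := by simp [mul_comm]
  have : (adjPairs gridAdj (gridFinset n d) + 2 * d * n ^ (d - 1) : ℤ) ≤ 2 * d * n ^ d := by
    exact_mod_cast hcount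
  rw [perimeter, card_gridFinset]
  push_cast
  linarith

end Grid

section Bootstrap

variable {n d r : ℕ}

def bpStepFinset (n d r : ℕ) (S : Finset (Fin d → ℕ)) : Finset (Fin d → ℕ) :=
  S ∪ {v ∈ gridFinset n d | r ≤ #{u ∈ S | gridAdj v u}}

lemma coe_bpStepFinset (S : Finset (Fin d → ℕ)) :
    (bpStepFinset n d r S : Set (Fin d → ℕ)) = bpStep n d r S := by
  have hcount : ∀ v, {u ∈ (S : Set (Fin d → ℕ)) | gridAdj u v}.ncard = #{u ∈ S | gridAdj v u} :=
    fun v => by rw [← Set.ncard_coe_finset, coe_filter]; simp only [comm (r := gridAdj)]; rfl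
  rw [bpStep, ← coe_gridFinset, bpStepFinset, coe_union, coe_filter]
  simp only [hcount]
  rfl

lemma infected_coe (A : Finset (Fin d → ℕ)) (t : ℕ) :
    infected n d r A t = ((bpStepFinset n d r)^[t] A : Finset (Fin d → ℕ)) :=
  ((Function.Semiconj.iterate_right (fun S => coe_bpStepFinset (n := n) (r := r) S) t) A).symm

lemma perimeter_iterate_bpStepFinset_le (A : Finset (Fin d → ℕ)) (t : ℕ) :
    perimeter gridAdj (2 * d) ((bpStepFinset n d d)^[t] A) ≤ perimeter gridAdj (2 * d) A := by
  induction t with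
  | zero => rfl
  | succ t ih =>
    refine le_trans ?_ ih
    rw [Function.iterate_succ_apply']
    refine perimeter_le_of_subset subset_union_left fun v hv => ?_
    obtain ⟨hvT, hvS⟩ := mem_sdiff.mp hv
    rw [bpStepFinset, mem_union, mem_filter] at hvT
    have := (hvT.resolve_left hvS).2
    omega

lemma infected_subset_gridSet {A : Set (Fin d → ℕ)} (hA : A ⊆ gridSet n d) (t : ℕ) :
    infected n d r A t ⊆ gridSet n d := by
  induction t with
  | zero => exact hA
  | succ t ih =>
    rw [infected, Function.iterate_succ_apply']
    exact Set.union_subset ih fun _ hv => hv.1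

lemma monotone_infected (A : Set (Fin d → ℕ)) : Monotone (infected n d r A) :=
  monotone_nat_of_le_succ fun t => by
    rw [infected, infected, Function.iterate_succ_apply']
    exact Set.subset_union_left

lemma exists_infected_eq_gridSet {A : Set (Fin d → ℕ)} (hA : A ⊆ gridSet n d)
    (hperc : percolates n d r A) : ∃ t, infected n d r A t = gridSet n d := by
  obtain ⟨t, ht⟩ := (monotone_infected A).directed_le.exists_mem_subset_of_finset_subset_biUnion
    (s := gridFinset n d) (by rw [coe_gridFinset]; exact hperc)
  exact ⟨t, (infected_subset_gridSet hA t).antisymm (coe_gridFinset ▸ ht)⟩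

theorem ncard_gt_of_percolates_of_gridAdj (hn : 1 ≤ n) {A : Set (Fin d → ℕ)}
    (hA : A ⊆ gridSet n d) (hperc : percolates n d d A) {a b : Fin d → ℕ} (ha : a ∈ A)
    (hb : b ∈ A) (hab : gridAdj a b) : n ^ (d - 1) < A.ncard := by
  obtain ⟨F, rfl⟩ := ((gridFinset n d).finite_toSet.subset
    (coe_gridFinset (n := n) ▸ hA)).exists_finset_coe
  obtain ⟨t, ht⟩ := exists_infected_eq_gridSet hA hperc
  have hfull : (bpStepFinset n d d)^[t] F = gridFinset n d := by
    rw [← coe_inj, ← infected_coe, ht, coe_gridFinset]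
  have hgrid := perimeter_gridFinset_ge (d := d) hn
  have hdecay := perimeter_iterate_bpStepFinset_le (n := n) F t
  have hpair := perimeter_le_of_adj (2 * d) (mem_coe.mp ha) (mem_coe.mp hb) hab
  rw [hfull] at hdecay
  rw [Set.ncard_coe_finset]
  push_cast at hpair
  have : (2 * d * n ^ (d - 1) : ℤ) < 2 * d * #F := by linarith
  exact_mod_cast lt_of_mul_lt_mul_left this (by positivity)

end Bootstrap

/-- For `n` odd the two vertices differ in the first coordinate, for `n` even in the second. -/
lemma gridAdj_centre_two (n : ℕ) :
    gridAdj (fun _ : Fin 2 => (n + 1) / 2) (fun i => if i = 0 then n / 2 else (n + 2) / 2) := by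
  rcases Nat.even_or_odd n with ⟨m, rfl⟩ | ⟨m, rfl⟩
  · exact ⟨1, Or.inr (by simp; omega), fun i hi => by
      have : i = 0 := by omega
      simp [this]; omega⟩
  · exact ⟨0, Or.inl (by simp; omega), fun i hi => by simp [hi]; omega⟩

theorem centre_not_fully_infected (n d : ℕ) (hn : 1 ≤ n) (hd : 2 ≤ d)
    (A : Set (Fin d → ℕ)) (hA : A ⊆ gridSet n d) (hperc : percolates n d d A)
    (hcard : A.ncard = n ^ (d - 1)) :
    (d = 2 →
      (fun _ : Fin d => (n + 1) / 2) ∉ A ∨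
      (fun i : Fin d => if i = (⟨0, by omega⟩ : Fin d) then n / 2 else (n + 2) / 2) ∉ A) ∧
    (3 ≤ d →
      (fun _ : Fin d => (n + 1) / 2) ∉ A ∨
      (fun i : Fin d => if i = (⟨0, by omega⟩ : Fin d) then (n + 1) / 2 + 1 else (n + 1) / 2) ∉ A) := by
  refine ⟨fun hd2 => ?_, fun _ => ?_⟩ <;> by_contra! hmem <;> refine hcard.not_gt ?_
  · subst hd2
    exact ncard_gt_of_percolates_of_gridAdj hn hA hperc hmem.1 hmem.2 (gridAdj_centre_two n)
  · exact ncard_gt_of_percolates_of_gridAdj hn hA hperc hmem.1 hmem.2 (gridAdj_const_ite_succ _ _)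
end
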